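/- If LP^MLN programs 𝔽 and 𝔾 over 𝒫 are strongly equivalent, then they are structurally equivalent. -/

import Mathlib

namespace LPMLN

/-- Propositional formulas over a set of atoms `P`, built from atoms and `⊥`
using `∧`, `∨`, `→`. -/
inductive Formula (P : Type) : Type where
  | atom : P → Formula P
  | bot  : Formula P
  | and  : Formula P → Formula P → Formula P
  | or   : Formula P → Formula P → Formula P
  | imp  : Formula P → Formula P → Formula P
deriving DecidableEq

variable {P : Type} [DecidableEq P]

/-- `¬F` abbreviates `F → ⊥`. -/
def Formula.neg (F : Formula P) : Formula P := .imp F .bot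

/-- Classical evaluation of a formula in an interpretation `X ⊆ P`. -/
def Formula.eval (X : Finset P) : Formula P → Bool
  | .atom p => decide (p ∈ X)
  | .bot => false
  | .and F G => F.eval X && G.eval X
  | .or F G => F.eval X || G.eval X
  | .imp F G => !(F.eval X) || G.eval X

/-- Classical satisfaction `X ⊨ F`. -/
def Formula.sat (X : Finset P) (F : Formula P) : Prop := F.eval X = true

/-- The reduct `F^X`: every maximal subformula not satisfied by `X` is replaced by `⊥`. -/
def Formula.reduct (X : Finset P) : Formula P → Formula P
  | .atom p => if p ∈ X then .atom p else .bot
  | .bot => .bot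
  | .and F G => if (Formula.and F G).eval X then .and (F.reduct X) (G.reduct X) else .bot
  | .or F G => if (Formula.or F G).eval X then .or (F.reduct X) (G.reduct X) else .bot
  | .imp F G => if (Formula.imp F G).eval X then .imp (F.reduct X) (G.reduct X) else .bot

/-- `X` satisfies a (finite) set of formulas. -/
def satSet (X : Finset P) (Γ : Finset (Formula P)) : Prop := ∀ F ∈ Γ, F.sat X

/-- The reduct `Γ^X` of a finite set of formulas. -/
def reductSet (X : Finset P) (Γ : Finset (Formula P)) : Finset (Formula P) :=
  Γ.image (Formula.reduct X)

/-- `X` is a stable model of `Γ` if `X ⊨ Γ^X` and no proper subset of `X` satisfies `Γ^X`. -/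
def StableModel (Γ : Finset (Formula P)) (X : Finset P) : Prop :=
  satSet X (reductSet X Γ) ∧ ∀ Y, Y ⊂ X → ¬ satSet Y (reductSet X Γ)

/-- A weight is a real number (soft) or the symbol `α` (hard). -/
inductive Weight : Type where
  | soft : ℝ → Weight
  | hard : Weight

noncomputable instance : DecidableEq Weight := Classical.decEq _

/-- An LP^MLN program: a finite set of weighted formulas `w : R`. -/
abbrev Program (P : Type) [DecidableEq P] := Finset (Weight × Formula P)

/-- `𝔽_X`: the weighted formulas of `𝔽` whose formula is satisfied by `X`. -/
noncomputable def progSat (𝔽 : Program P) (X : Finset P) : Program P :=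
  𝔽.filter (fun r => r.2.eval X = true)

/-- `𝔽̄`: the formulas of `𝔽`, with weights dropped. -/
noncomputable def formulas (𝔽 : Program P) : Finset (Formula P) := 𝔽.image Prod.snd

/-- `X` is a soft stable model of `𝔽` (i.e. `X ∈ SM[𝔽]`) if `X` is a stable model of `𝔽̄_X`. -/
def SoftStable (𝔽 : Program P) (X : Finset P) : Prop :=
  StableModel (formulas (progSat 𝔽 X)) X

/-- w-expressions: either zero or a formal expression `e^{c₁ + c₂·α}` with `c₁ : ℝ`, `c₂ : ℤ`. -/
inductive WExpr : Type where
  | zero : WExpr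
  | exp : ℝ → ℤ → WExpr

/-- Multiplication of w-expressions: add exponents componentwise; zero is absorbing. -/
def WExpr.mul : WExpr → WExpr → WExpr
  | .zero, _ => .zero
  | _, .zero => .zero
  | .exp a b, .exp c d => .exp (a + c) (b + d)

/-- Inverse of a w-expression: negate both exponents. -/
def WExpr.inv : WExpr → WExpr
  | .zero => .zero
  | .exp a b => .exp (-a) (-b)

/-- Evaluation of a w-expression at a real number `a`. -/
noncomputable def WExpr.eval (a : ℝ) : WExpr → ℝ
  | .zero => 0
  | .exp c₁ c₂ => Real.exp (c₁ + c₂ * a)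

/-- The real contribution of a weight (hard rules contribute `0` to the soft sum). -/
def softWeight : Weight → ℝ
  | .soft r => r
  | .hard => 0

/-- Sum of the weights of the soft rules of `𝔽`. -/
noncomputable def softSum (𝔽 : Program P) : ℝ := ∑ r ∈ 𝔽, softWeight r.1

/-- The number of hard rules of `𝔽`. -/
noncomputable def hardCount (𝔽 : Program P) : ℤ :=
  ((𝔽.filter (fun r => r.1 = Weight.hard)).card : ℤ)

/-- `TW(𝔽) = e^{c₁ + c₂·α}` where `c₁` is the sum of the soft weights and
`c₂` the number of hard rules. -/
noncomputable def TW (𝔽 : Program P) : WExpr := .exp (softSum 𝔽) (hardCount 𝔽)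

open Classical in
/-- `W_𝔽(X) = TW(𝔽_X)` if `X ∈ SM[𝔽]`, and zero otherwise. -/
noncomputable def W (𝔽 : Program P) (X : Finset P) : WExpr :=
  if SoftStable 𝔽 X then TW (progSat 𝔽 X) else .zero

open Classical in
/-- `W^pnt_𝔽(X) = TW(𝔽 \ 𝔽_X)⁻¹` if `X ∈ SM[𝔽]`, and zero otherwise. -/
noncomputable def Wpnt (𝔽 : Program P) (X : Finset P) : WExpr :=
  if SoftStable 𝔽 X then (TW (𝔽 \ progSat 𝔽 X)).inv else .zero

/-- `P_𝔽(X)`: the limit as `a → ∞` of the normalized evaluation of `W_𝔽(X)`. -/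
noncomputable def Pr [Fintype P] (𝔽 : Program P) (X : Finset P) : ℝ :=
  Filter.limUnder Filter.atTop
    (fun a : ℝ => (W 𝔽 X).eval a / ∑ Y : Finset P, (W 𝔽 Y).eval a)

/-- `P^pnt_𝔽(X)`: the limit as `a → ∞` of the normalized evaluation of `W^pnt_𝔽(X)`. -/
noncomputable def PrPnt [Fintype P] (𝔽 : Program P) (X : Finset P) : ℝ :=
  Filter.limUnder Filter.atTop
    (fun a : ℝ => (Wpnt 𝔽 X).eval a / ∑ Y : Finset P, (Wpnt 𝔽 Y).eval a)

/-- Weak equivalence: the same probability distribution. -/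
def WeakEquiv [Fintype P] (𝔽 𝔾 : Program P) : Prop :=
  ∀ X : Finset P, Pr 𝔽 X = Pr 𝔾 X

/-- Strong equivalence of LP^MLN programs. -/
def StrongEquiv [Fintype P] (𝔽 𝔾 : Program P) : Prop :=
  ∀ (ℍ : Program P) (X : Finset P), Pr (𝔽 ∪ ℍ) X = Pr (𝔾 ∪ ℍ) X

/-- Structural equivalence of LP^MLN programs. -/
def StructEquiv (𝔽 𝔾 : Program P) : Prop :=
  ∀ (ℍ : Program P) (X : Finset P), SoftStable (𝔽 ∪ ℍ) X ↔ SoftStable (𝔾 ∪ ℍ) X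

/-- HT satisfaction `⟨Y,X⟩ ⊨ₕₜ F` (at the world "here"). -/
def htSat (Y X : Finset P) : Formula P → Prop
  | .atom p => p ∈ Y
  | .bot => False
  | .and F G => htSat Y X F ∧ htSat Y X G
  | .or F G => htSat Y X F ∨ htSat Y X G
  | .imp F G => (htSat Y X F → htSat Y X G) ∧ (Formula.imp F G).sat X

/-- `⟨Y,X⟩` is an HT model of a set `Γ` of formulas. -/
def HTModel (Γ : Finset (Formula P)) (Y X : Finset P) : Prop :=
  Y ⊆ X ∧ ∀ F ∈ Γ, htSat Y X F

/-- `⟨Y,X⟩` is a soft HT model of an LP^MLN program `𝔽`. -/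
def SoftHT (𝔽 : Program P) (Y X : Finset P) : Prop :=
  Y ⊆ X ∧ ∀ r ∈ progSat 𝔽 X, htSat Y X r.2

/-- The choice formula `{F}^ch = F ∨ ¬F`. -/
def Formula.ch (F : Formula P) : Formula P := .or F F.neg

/-- `{Γ}^ch`, choice formulas of a set of formulas. -/
def chSet (Γ : Finset (Formula P)) : Finset (Formula P) := Γ.image Formula.ch

/-- Renaming of atoms. -/
def Formula.rename {Q : Type} (f : P → Q) : Formula P → Formula Q
  | .atom p => .atom (f p)
  | .bot => .bot
  | .and F G => .and (F.rename f) (G.rename f)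
  | .or F G => .or (F.rename f) (G.rename f)
  | .imp F G => .imp (F.rename f) (G.rename f)

/-- `Δ_{𝒫'}(F)`, a formula over `𝒫 ∪ 𝒫'`; unprimed atoms are `Sum.inl p`,
primed atoms `p'` are `Sum.inr p`. -/
def Formula.delta : Formula P → Formula (P ⊕ P)
  | .atom p => .atom (Sum.inr p)
  | .bot => .bot
  | .and F G => .and F.delta G.delta
  | .or F G => .or F.delta G.delta
  | .imp F G => .and (.imp F.delta G.delta)
      (.imp (F.rename Sum.inl) (G.rename Sum.inl))

/-- `Δ_{𝒫'}(Γ)` for a set of formulas. -/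
def deltaSet (Γ : Finset (Formula P)) : Finset (Formula (P ⊕ P)) :=
  Γ.image Formula.delta

/-- The interpretation `Y' ∪ X` of `𝒫 ∪ 𝒫'`. -/
def primedInterp (Y X : Finset P) : Finset (P ⊕ P) :=
  X.image Sum.inl ∪ Y.image Sum.inr


/-! Adding to `ℍ` enough hard rules that are satisfied only by `X` makes `X` the unique most
probable interpretation as soon as it is a soft stable model at all. Every added rule is a
negation, and the reduct of a satisfied negation is a tautology, so the added rules do not
change which interpretations are soft stable. Hence `X ∈ SM[𝔽 ∪ ℍ]` iff `X` has probability `1`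
in `𝔽 ∪ ℍ` plus these rules, and strong equivalence equates these probabilities. -/

open Filter Topology

lemma tendsto_div_sum_of_dominant {ι : Type*} [Fintype ι] [DecidableEq ι] {l : Filter ℝ}
    (f : ι → ℝ → ℝ) (x : ι) (hx : ∀ a, f x a ≠ 0)
    (hdom : ∀ y ≠ x, Tendsto (fun a => f y a / f x a) l (𝓝 0)) :
    Tendsto (fun a => f x a / ∑ y, f y a) l (𝓝 1) := by
  have hterm : ∀ y ∈ Finset.univ,
      Tendsto (fun a => f y a / f x a) l (𝓝 (if y = x then 1 else 0)) := by
    intro y _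
    rcases eq_or_ne y x with rfl | hy
    · simpa [div_self (hx _)] using tendsto_const_nhds
    · simpa [hy] using hdom y hy
  have hsum := tendsto_finsetSum Finset.univ hterm
  simp only [← Finset.sum_div, Finset.sum_ite_eq', Finset.mem_univ, if_true] at hsum
  simpa [inv_div] using hsum.inv₀ one_ne_zero

lemma WExpr.tendsto_eval_div_eval_exp {c c' : ℝ} {k k' : ℤ} (hk : k' < k) :
    Tendsto (fun a => (WExpr.exp c' k').eval a / (WExpr.exp c k).eval a) atTop (𝓝 0) := by
  have hlin : Tendsto (fun a : ℝ => (c' - c) + ((k' : ℝ) - k) * a) atTop atBot :=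
    tendsto_atBot_add_const_left _ _
      ((tendsto_const_mul_atBot_of_neg (by exact_mod_cast sub_neg.2 hk)).2 tendsto_id)
  refine (Real.tendsto_exp_atBot.comp hlin).congr fun a => ?_
  simp only [Function.comp, WExpr.eval, ← Real.exp_sub]
  ring_nf

lemma Pr_eq_zero [Fintype P] {𝕂 : Program P} {X : Finset P} (hX : ¬ SoftStable 𝕂 X) :
    Pr 𝕂 X = 0 := by
  simp only [Pr, W, if_neg hX, WExpr.eval, zero_div]
  exact tendsto_const_nhds.limUnder_eq

lemma Pr_eq_one [Fintype P] {𝕂 : Program P} {X : Finset P} (hX : SoftStable 𝕂 X)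
    (hmax : ∀ Y, SoftStable 𝕂 Y → Y ≠ X →
      hardCount (progSat 𝕂 Y) < hardCount (progSat 𝕂 X)) :
    Pr 𝕂 X = 1 := by
  refine (tendsto_div_sum_of_dominant (fun Y a => (W 𝕂 Y).eval a) X ?_ ?_).limUnder_eq
  · intro a
    simp only [W, if_pos hX, TW, WExpr.eval]
    exact (Real.exp_pos _).ne'
  · intro Y hY
    by_cases hsY : SoftStable 𝕂 Y
    · simp only [W, if_pos hsY, if_pos hX, TW]
      exact WExpr.tendsto_eval_div_eval_exp (hmax Y hsY hY)
    · simp [W, if_neg hsY, WExpr.eval]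

lemma Formula.reduct_eq_bot {X : Finset P} {F : Formula P} (h : F.eval X = false) :
    F.reduct X = .bot := by
  cases F <;> simp_all [Formula.reduct, Formula.eval]

lemma Formula.sat_reduct_neg {Y : Finset P} {F : Formula P} (h : F.neg.sat Y) (Z : Finset P) :
    (F.neg.reduct Y).sat Z := by
  have hF : F.eval Y = false := by simpa [Formula.sat, Formula.neg, Formula.eval] using h
  simp [Formula.neg, Formula.reduct, Formula.reduct_eq_bot hF, hF, Formula.sat, Formula.eval]

lemma satSet_union {X : Finset P} {Γ Δ : Finset (Formula P)} :
    satSet X (Γ ∪ Δ) ↔ satSet X Γ ∧ satSet X Δ := by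
  simp only [satSet, Finset.mem_union, or_imp, forall_and]

lemma reductSet_formulas_progSat_union (A U : Program P) (X : Finset P) :
    reductSet X (formulas (progSat (A ∪ U) X)) =
      reductSet X (formulas (progSat A X)) ∪ reductSet X (formulas (progSat U X)) := by
  simp only [reductSet, formulas, progSat, Finset.filter_union, Finset.image_union]

lemma softStable_union_iff_of_sat_reduct {A U : Program P} {X : Finset P}
    (hU : ∀ r ∈ U, r.2.sat X → ∀ Z, (r.2.reduct X).sat Z) :
    SoftStable (A ∪ U) X ↔ SoftStable A X := by
  have hUX : ∀ Z, satSet Z (reductSet X (formulas (progSat U X))) := by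
    simp only [satSet, reductSet, formulas, progSat, Finset.forall_mem_image,
      Finset.mem_filter]
    exact fun Z r hr => hU r hr.1 hr.2 Z
  simp only [SoftStable, StableModel, reductSet_formulas_progSat_union, satSet_union, hUX,
    and_true]

def Formula.disagreeAt (X : Finset P) (p : P) : Formula P :=
  if p ∈ X then (Formula.atom p).neg else .atom p

lemma Formula.sat_disagreeAt {X Y : Finset P} {p : P} :
    (Formula.disagreeAt X p).sat Y ↔ ¬ (p ∈ Y ↔ p ∈ X) := by
  by_cases hX : p ∈ X <;> simp [Formula.disagreeAt, Formula.sat, Formula.neg, Formula.eval, hX]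

lemma Formula.eval_neg_iterate_two_mul (k : ℕ) (F : Formula P) (Y : Finset P) :
    (Formula.neg^[2 * k] F).eval Y = F.eval Y := by
  induction k with
  | zero => rfl
  | succ k ih =>
    rw [show 2 * (k + 1) = 2 * k + 1 + 1 by ring, Function.iterate_succ_apply',
      Function.iterate_succ_apply']
    simpa [Formula.neg, Formula.eval] using ih

lemma Formula.neg_iterate_injective {Q : Type} (F : Formula Q) :
    Function.Injective fun n => Formula.neg^[n] F := by
  have hsize : StrictMono fun n => sizeOf (Formula.neg^[n] F) :=
    strictMono_nat_of_lt_succ fun n => by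
      simp only [Function.iterate_succ_apply', Formula.neg, Formula.imp.sizeOf_spec]
      omega
  exact hsize.injective.of_comp

/-- Odd iterates of `¬` give `N` distinct hard rules, all equivalent to `¬ disagreeAt X p` and
all negations. -/
noncomputable def pinAtom (X : Finset P) (p : P) (N : ℕ) : Program P :=
  (Finset.range N).image fun k => (.hard, Formula.neg^[2 * k + 1] (Formula.disagreeAt X p))

noncomputable def pin [Fintype P] (X : Finset P) (N : ℕ) : Program P :=
  Finset.univ.biUnion fun p => pinAtom X p N

lemma card_pinAtom (X : Finset P) (p : P) (N : ℕ) : (pinAtom X p N).card = N := by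
  rw [pinAtom, Finset.card_image_of_injective, Finset.card_range]
  intro k j hkj
  have h := Formula.neg_iterate_injective _ (Prod.ext_iff.1 hkj).2
  omega

lemma exists_neg_of_mem_pinAtom {X : Finset P} {p : P} {N : ℕ} {r : Weight × Formula P}
    (hr : r ∈ pinAtom X p N) :
    ∃ F : Formula P, r = (.hard, F.neg) ∧ ∀ Y, (F.neg.sat Y ↔ (p ∈ Y ↔ p ∈ X)) := by
  obtain ⟨k, -, rfl⟩ := Finset.mem_image.1 hr
  refine ⟨_, by rw [Function.iterate_succ_apply'], fun Y => ?_⟩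
  simp only [Formula.sat, Formula.neg, Formula.eval, Formula.eval_neg_iterate_two_mul,
    Bool.or_false, Bool.not_eq_eq_eq_not, Bool.not_true, ← Bool.not_eq_true]
  exact Formula.sat_disagreeAt.not.trans not_not

lemma hard_sat_of_mem_pin [Fintype P] {X : Finset P} {N : ℕ} {r : Weight × Formula P}
    (hr : r ∈ pin X N) : r.1 = .hard ∧ r.2.sat X := by
  obtain ⟨p, -, hp⟩ := Finset.mem_biUnion.1 hr
  obtain ⟨F, rfl, hF⟩ := exists_neg_of_mem_pinAtom hp
  exact ⟨rfl, (hF X).2 Iff.rfl⟩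

lemma sat_reduct_of_mem_pin [Fintype P] {X : Finset P} {N : ℕ} {r : Weight × Formula P}
    (hr : r ∈ pin X N) {Y : Finset P} (hY : r.2.sat Y) (Z : Finset P) :
    (r.2.reduct Y).sat Z := by
  obtain ⟨p, -, hp⟩ := Finset.mem_biUnion.1 hr
  obtain ⟨F, rfl, -⟩ := exists_neg_of_mem_pinAtom hp
  exact Formula.sat_reduct_neg hY Z

lemma hardCount_progSat_union_pin_lt [Fintype P] {A : Program P} {X Y : Finset P} {N : ℕ}
    (hN : A.card < N) (hYX : Y ≠ X) :
    hardCount (progSat (A ∪ pin X N) Y) < hardCount (progSat (A ∪ pin X N) X) := by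
  set S := A ∪ pin X N
  obtain ⟨p, hp⟩ : ∃ p, ¬ (p ∈ Y ↔ p ∈ X) := by
    by_contra! h
    exact hYX (Finset.ext h)
  have hpin_le : (pin X N).card ≤ ((progSat S X).filter fun r => r.1 = .hard).card := by
    refine Finset.card_le_card fun r hr => ?_
    obtain ⟨hhard, hsat⟩ := hard_sat_of_mem_pin hr
    exact Finset.mem_filter.2 ⟨Finset.mem_filter.2 ⟨Finset.mem_union_right _ hr, hsat⟩, hhard⟩
  have hpinAtom : pinAtom X p N ⊆ pin X N :=
    Finset.subset_biUnion_of_mem (fun q => pinAtom X q N) (Finset.mem_univ p)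
  have hY_le : (progSat S Y).card + N ≤ S.card := by
    have hdisj : Disjoint (progSat S Y) (pinAtom X p N) := by
      refine Finset.disjoint_right.2 fun r hr hrY => hp ?_
      obtain ⟨F, rfl, hF⟩ := exists_neg_of_mem_pinAtom hr
      exact (hF Y).1 (Finset.mem_filter.1 hrY).2
    rw [← card_pinAtom X p N, ← Finset.card_union_of_disjoint hdisj]
    exact Finset.card_le_card (Finset.union_subset (Finset.filter_subset _ _)
      (hpinAtom.trans Finset.subset_union_right))
  have hS : S.card ≤ A.card + (pin X N).card := Finset.card_union_le _ _
  have hhard_le := Finset.card_filter_le (progSat S Y) fun r => r.1 = .hard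
  simp only [hardCount]
  omega

lemma softStable_iff_Pr_union_pin_eq_one [Fintype P] (A : Program P) (X : Finset P) {N : ℕ}
    (hN : A.card < N) : SoftStable A X ↔ Pr (A ∪ pin X N) X = 1 := by
  have hstable : ∀ Y, SoftStable (A ∪ pin X N) Y ↔ SoftStable A Y := fun Y =>
    softStable_union_iff_of_sat_reduct fun _ hr => sat_reduct_of_mem_pin hr
  refine ⟨fun hX => Pr_eq_one ((hstable X).2 hX) fun Y _ hYX =>
    hardCount_progSat_union_pin_lt hN hYX, fun hPr => ?_⟩
  by_contra hX
  rw [Pr_eq_zero ((hstable X).not.2 hX)] at hPr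
  exact zero_ne_one hPr

/-- strong equivalence implies structural equivalence. -/
theorem stmt4 {P : Type} [DecidableEq P] [Fintype P] (𝔽 𝔾 : Program P)
    (h : StrongEquiv 𝔽 𝔾) : StructEquiv 𝔽 𝔾 := by
  intro ℍ X
  set N := (𝔽 ∪ ℍ).card + (𝔾 ∪ ℍ).card + 1
  have hPr := h (ℍ ∪ pin X N) X
  rw [← Finset.union_assoc, ← Finset.union_assoc] at hPr
  rw [softStable_iff_Pr_union_pin_eq_one (𝔽 ∪ ℍ) X (N := N) (by omega),
    softStable_iff_Pr_union_pin_eq_one (𝔾 ∪ ℍ) X (N := N) (by omega), hPr]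

end LPMLN
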